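/- Let f: ℝⁿ∖{0} → ℝ be smooth and positively 0-homogeneous, and suppose that for every y the restriction of the Euclidean Hessian of f to the tangent space of the sphere through y satisfies the equation: for all u, v with ⟨u,y⟩ = ⟨v,y⟩ = 0, Hess f(y)(u,v) + f(y)⟨u,v⟩/|y|² = c·⟨u,v⟩/|y|² for a constant c. Then f(y) = c + Σᵢ aᵢ yⁱ/|y| for some constants aᵢ. -/

import Mathlib

open scoped RealInnerProductSpace

lemma const_on_of_fderiv_zero' {E F : Type*} [NormedAddCommGroup E] [NormedSpace ℝ E]
    [NormedAddCommGroup F] [NormedSpace ℝ F] {U : Set E} (hU : IsOpen U)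
    (hUc : IsPreconnected U) {g : E → F} (hg : ∀ y ∈ U, DifferentiableAt ℝ g y)
    (h0 : ∀ y ∈ U, fderiv ℝ g y = 0) {x y : E} (hx : x ∈ U) (hy : y ∈ U) : g x = g y := by
  have loc : ∀ z ∈ U, ∃ ε > 0, Metric.ball z ε ⊆ U ∧ ∀ w ∈ Metric.ball z ε, g w = g z := by
    intro z hz
    obtain ⟨ε, hε, hball⟩ := Metric.isOpen_iff.1 hU z hz
    refine ⟨ε, hε, hball, fun w hw => ?_⟩
    refine (convex_ball z ε).is_const_of_fderivWithin_eq_zero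
      (fun w' hw' => (hg w' (hball hw')).differentiableWithinAt) (fun w' hw' => ?_) hw
      (Metric.mem_ball_self hε)
    rw [fderivWithin_of_isOpen Metric.isOpen_ball hw']
    exact h0 w' (hball hw')
  set V₁ : Set E := {z | z ∈ U ∧ g z = g y} with hV₁def
  set V₂ : Set E := {z | z ∈ U ∧ g z ≠ g y} with hV₂def
  have hV₁ : IsOpen V₁ := by
    rw [Metric.isOpen_iff]
    rintro z ⟨hz, hgz⟩
    obtain ⟨ε, hε, hb, hc⟩ := loc z hz
    exact ⟨ε, hε, fun w hw => ⟨hb hw, (hc w hw).trans hgz⟩⟩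
  have hV₂ : IsOpen V₂ := by
    rw [Metric.isOpen_iff]
    rintro z ⟨hz, hgz⟩
    obtain ⟨ε, hε, hb, hc⟩ := loc z hz
    exact ⟨ε, hε, fun w hw => ⟨hb hw, (hc w hw).symm ▸ hgz⟩⟩
  have hsub : U ⊆ V₁ := by
    refine hUc.subset_left_of_subset_union hV₁ hV₂ ?_ ?_ ⟨y, hy, hy, rfl⟩
    · rw [Set.disjoint_left]; rintro z ⟨_, h1⟩ ⟨_, h2⟩; exact h2 h1
    · intro z hz; by_cases h : g z = g y
      · exact Or.inl ⟨hz, h⟩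
      · exact Or.inr ⟨hz, h⟩
  exact (hsub hx).2

lemma hasFDerivAt_norm' {E : Type*} [NormedAddCommGroup E] [InnerProductSpace ℝ E]
    {y : E} (hy : y ≠ 0) :
    HasFDerivAt (fun z : E => ‖z‖) (‖y‖⁻¹ • (innerSL ℝ y : E →L[ℝ] ℝ)) y := by
  have h1 : HasFDerivAt (fun z : E => ‖z‖ ^ 2) ((2:ℕ) • (innerSL ℝ y : E →L[ℝ] ℝ)) y :=
    (hasStrictFDerivAt_norm_sq y).hasFDerivAt
  have hny : ‖y‖ ≠ 0 := norm_ne_zero_iff.2 hy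
  have h2 : HasDerivAt Real.sqrt (1 / (2 * Real.sqrt (‖y‖ ^ 2))) (‖y‖ ^ 2) :=
    Real.hasDerivAt_sqrt (pow_ne_zero 2 hny)
  have h3 := h2.comp_hasFDerivAt y h1
  have heq : (Real.sqrt ∘ fun z : E => ‖z‖ ^ 2) = fun z : E => ‖z‖ := by
    funext z; simp [Function.comp, Real.sqrt_sq (norm_nonneg z)]
  rw [heq] at h3
  refine h3.congr_fderiv ?_
  rw [Real.sqrt_sq (norm_nonneg y)]
  ext u
  simp only [ContinuousLinearMap.coe_smul', Pi.smul_apply, smul_eq_mul,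
    ContinuousLinearMap.smul_apply]
  field_simp
  ring

set_option maxHeartbeats 1000000

/-- If a smooth positively 0-homogeneous function `f` on `ℝⁿ ∖ {0}` satisfies, on tangent
directions to the spheres, `Hess f(y)(u,v) + f(y)⟨u,v⟩/|y|² = c⟨u,v⟩/|y|²` for a constant
`c`, then `f(y) = c + ∑ᵢ aᵢ yⁱ/|y|` for some constants `aᵢ`. -/
theorem stmt_13 (n : ℕ) (hn : 2 ≤ n) (c : ℝ)
    (f : EuclideanSpace ℝ (Fin n) → ℝ)
    (hf : ContDiffOn ℝ (⊤ : ℕ∞) f {y | y ≠ 0})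
    (hhom : ∀ y : EuclideanSpace ℝ (Fin n), y ≠ 0 → ∀ t : ℝ, 0 < t → f (t • y) = f y)
    (hhess : ∀ y : EuclideanSpace ℝ (Fin n), y ≠ 0 →
      ∀ u v : EuclideanSpace ℝ (Fin n), ⟪u, y⟫ = 0 → ⟪v, y⟫ = 0 →
        fderiv ℝ (fun z => fderiv ℝ f z u) y v + f y * ⟪u, v⟫ / ‖y‖ ^ 2 =
          c * ⟪u, v⟫ / ‖y‖ ^ 2) :
    ∃ a : Fin n → ℝ, ∀ y : EuclideanSpace ℝ (Fin n), y ≠ 0 →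
      f y = c + ∑ i, a i * y i / ‖y‖ := by
  have hUo : IsOpen {y : EuclideanSpace ℝ (Fin n) | y ≠ 0} := isOpen_compl_singleton
  have hUc : IsPreconnected {y : EuclideanSpace ℝ (Fin n) | y ≠ 0} := by
    have hr : Module.rank ℝ (EuclideanSpace ℝ (Fin n)) = n := by
      rw [← Module.finrank_eq_rank, finrank_euclideanSpace_fin]
    exact (isConnected_compl_singleton_of_one_lt_rank
      (by rw [hr]; exact_mod_cast lt_of_lt_of_le one_lt_two hn) 0).isPreconnected
  -- differentiability facts
  have hfd : ∀ y : EuclideanSpace ℝ (Fin n), y ≠ 0 → DifferentiableAt ℝ f y := fun y hy =>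
    (hf.contDiffAt (hUo.mem_nhds hy)).differentiableAt (by simp)
  have hfd' : ∀ y : EuclideanSpace ℝ (Fin n), y ≠ 0 →
      DifferentiableAt ℝ (fderiv ℝ f) y := fun y hy =>
    (((hf.contDiffAt (hUo.mem_nhds hy)).fderiv_right (m := (⊤ : ℕ∞)) (by simp)).differentiableAt (by simp))
  -- first Euler identity
  have euler1 : ∀ y : EuclideanSpace ℝ (Fin n), y ≠ 0 → fderiv ℝ f y y = 0 := by
    intro y hy
    have hcurve : HasDerivAt (fun t : ℝ => f (t • y)) (fderiv ℝ f y y) 1 := by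
      have h1 : HasDerivAt (fun t : ℝ => t • y) y 1 := by
        simpa using (hasDerivAt_id (1:ℝ)).smul_const y
      have h2 : HasFDerivAt f (fderiv ℝ f y) ((1:ℝ) • y) := by
        rw [one_smul]; exact (hfd y hy).hasFDerivAt
      exact h2.comp_hasDerivAt (1:ℝ) h1
    have hconst : (fun t : ℝ => f (t • y)) =ᶠ[nhds (1:ℝ)] fun _ => f y := by
      filter_upwards [eventually_gt_nhds (zero_lt_one)] with t ht
      exact hhom y hy t ht
    exact hcurve.unique ((hasDerivAt_const (1:ℝ) (f y)).congr_of_eventuallyEq hconst)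
  -- derivative of z ↦ fderiv f z u
  have happly : ∀ y : EuclideanSpace ℝ (Fin n), y ≠ 0 → ∀ u,
      HasFDerivAt (fun z => fderiv ℝ f z u)
        ((ContinuousLinearMap.apply ℝ ℝ u).comp (fderiv ℝ (fderiv ℝ f) y)) y := fun y hy u =>
    (ContinuousLinearMap.apply ℝ ℝ u).hasFDerivAt.comp y (hfd' y hy).hasFDerivAt
  -- symmetry of second derivative
  have hsym : ∀ y : EuclideanSpace ℝ (Fin n), y ≠ 0 → ∀ u v,
      fderiv ℝ (fderiv ℝ f) y u v = fderiv ℝ (fderiv ℝ f) y v u := by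
    intro y hy u v
    refine second_derivative_symmetric_of_eventually (f := f) ?_ (hfd' y hy).hasFDerivAt u v
    filter_upwards [hUo.mem_nhds hy] with z hz
    exact (hfd z hz).hasFDerivAt
  -- second Euler identity
  have euler2 : ∀ y : EuclideanSpace ℝ (Fin n), y ≠ 0 → ∀ v,
      fderiv ℝ (fderiv ℝ f) y v y = - fderiv ℝ f y v := by
    intro y hy v
    have hG : HasFDerivAt (fun z => fderiv ℝ f z z)
        ((fderiv ℝ f y).comp (ContinuousLinearMap.id ℝ _)
          + (fderiv ℝ (fderiv ℝ f) y).flip y) y :=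
      (hfd' y hy).hasFDerivAt.clm_apply (hasFDerivAt_id y)
    have hzero : (fun z : EuclideanSpace ℝ (Fin n) => fderiv ℝ f z z) =ᶠ[nhds y]
        fun _ => (0:ℝ) := by
      filter_upwards [hUo.mem_nhds hy] with z hz
      exact euler1 z hz
    have h0 : HasFDerivAt (fun z : EuclideanSpace ℝ (Fin n) => fderiv ℝ f z z) 0 y :=
      ((hasFDerivAt_const (0:ℝ) y) : HasFDerivAt _ (0 : EuclideanSpace ℝ (Fin n) →L[ℝ] ℝ) y).congr_of_eventuallyEq hzero
    have := hG.unique h0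
    have hv := congrArg (fun (L : EuclideanSpace ℝ (Fin n) →L[ℝ] ℝ) => L v) this
    simp only [ContinuousLinearMap.add_apply, ContinuousLinearMap.comp_apply,
      ContinuousLinearMap.coe_id', id_eq, ContinuousLinearMap.flip_apply,
      ContinuousLinearMap.zero_apply] at hv
    linarith
  -- Hessian formula for general directions
  have hBform : ∀ y : EuclideanSpace ℝ (Fin n), y ≠ 0 → ∀ u v,
      fderiv ℝ (fderiv ℝ f) y v u =
        (c - f y) / ‖y‖ ^ 2 * (⟪u, v⟫ - ⟪y, u⟫ * ⟪y, v⟫ / ‖y‖ ^ 2)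
          - ⟪y, u⟫ / ‖y‖ ^ 2 * fderiv ℝ f y v - ⟪y, v⟫ / ‖y‖ ^ 2 * fderiv ℝ f y u := by
    intro y hy u v
    have hr2 : (⟪y, y⟫ : ℝ) = ‖y‖ ^ 2 := real_inner_self_eq_norm_sq y
    have hrne : (‖y‖ : ℝ) ≠ 0 := norm_ne_zero_iff.2 hy
    have hr2ne : (‖y‖ : ℝ) ^ 2 ≠ 0 := pow_ne_zero 2 hrne
    set α : ℝ := ⟪y, u⟫ / ‖y‖ ^ 2 with hα
    set β : ℝ := ⟪y, v⟫ / ‖y‖ ^ 2 with hβ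
    have hut : (⟪u - α • y, y⟫ : ℝ) = 0 := by
      rw [inner_sub_left, real_inner_smul_left, hr2, hα, real_inner_comm u y]
      field_simp
      ring
    have hvt : (⟪v - β • y, y⟫ : ℝ) = 0 := by
      rw [inner_sub_left, real_inner_smul_left, hr2, hβ, real_inner_comm v y]
      field_simp
      ring
    have key := hhess y hy (u - α • y) (v - β • y) hut hvt
    rw [(happly y hy (u - α • y)).fderiv] at key
    simp only [ContinuousLinearMap.comp_apply, ContinuousLinearMap.apply_apply,
      map_sub, map_smul, ContinuousLinearMap.sub_apply, ContinuousLinearMap.smul_apply,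
      smul_eq_mul] at key
    rw [euler2 y hy v] at key
    have hyu : fderiv ℝ (fderiv ℝ f) y y u = - fderiv ℝ f y u := by
      rw [hsym y hy y u, euler2 y hy u]
    have hyy : fderiv ℝ (fderiv ℝ f) y y y = 0 := by
      rw [euler2 y hy y, euler1 y hy, neg_zero]
    rw [hyu, hyy] at key
    have hinner : (⟪u - α • y, v - β • y⟫ : ℝ) = ⟪u, v⟫ - ⟪y, u⟫ * ⟪y, v⟫ / ‖y‖ ^ 2 := by
      rw [inner_sub_left, inner_sub_right, inner_sub_right, real_inner_smul_left,
        real_inner_smul_left, real_inner_smul_right, real_inner_smul_right, hr2,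
        real_inner_comm u y, hα, hβ]
      field_simp
      ring
    rw [hinner] at key
    field_simp at key ⊢
    nlinarith [key]
  -- the function h and its derivative
  set h : EuclideanSpace ℝ (Fin n) → ℝ := fun z => ‖z‖ * (f z - c) with hhdef
  have hh : ∀ y : EuclideanSpace ℝ (Fin n), y ≠ 0 →
      HasFDerivAt h (‖y‖ • fderiv ℝ f y
        + ((f y - c) * ‖y‖⁻¹) • (innerSL ℝ y : EuclideanSpace ℝ (Fin n) →L[ℝ] ℝ)) y := by
    intro y hy
    have := (hasFDerivAt_norm' hy).mul ((hfd y hy).hasFDerivAt.sub_const c)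
    refine this.congr_fderiv ?_
    rw [smul_smul]
  have hCh : ∀ y : EuclideanSpace ℝ (Fin n), y ≠ 0 → ContDiffAt ℝ (⊤ : ℕ∞) h y := by
    intro y hy
    exact (contDiffAt_id.norm ℝ hy).mul ((hf.contDiffAt (hUo.mem_nhds hy)).sub contDiffAt_const)
  have hdh : ∀ y : EuclideanSpace ℝ (Fin n), y ≠ 0 → DifferentiableAt ℝ (fderiv ℝ h) y :=
    fun y hy => ((hCh y hy).fderiv_right (m := (⊤ : ℕ∞)) (by simp)).differentiableAt (by simp)
  -- the key second-derivative computation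
  have key : ∀ y : EuclideanSpace ℝ (Fin n), y ≠ 0 → ∀ u v,
      fderiv ℝ (fun z => fderiv ℝ h z u) y v = 0 := by
    intro y hy u v
    have hrne : (‖y‖ : ℝ) ≠ 0 := norm_ne_zero_iff.2 hy
    have hev : (fun z => fderiv ℝ h z u) =ᶠ[nhds y]
        fun z => ‖z‖ * (fderiv ℝ f z u) + ((f z - c) * ‖z‖⁻¹) * ⟪z, u⟫ := by
      filter_upwards [hUo.mem_nhds hy] with z hz
      rw [(hh z hz).fderiv]
      simp [ContinuousLinearMap.add_apply, ContinuousLinearMap.smul_apply, innerSL_apply_apply,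
        smul_eq_mul]
    rw [hev.fderiv_eq]
    have H1 : HasFDerivAt (fun z => ‖z‖ * (fderiv ℝ f z u))
        (‖y‖ • ((ContinuousLinearMap.apply ℝ ℝ u).comp (fderiv ℝ (fderiv ℝ f) y))
          + (fderiv ℝ f y u) • (‖y‖⁻¹ • (innerSL ℝ y : EuclideanSpace ℝ (Fin n) →L[ℝ] ℝ))) y :=
      (hasFDerivAt_norm' hy).mul (happly y hy u)
    have Hinv : HasFDerivAt (fun z : EuclideanSpace ℝ (Fin n) => ‖z‖⁻¹)
        ((-(‖y‖ ^ 2)⁻¹) • (‖y‖⁻¹ • (innerSL ℝ y : EuclideanSpace ℝ (Fin n) →L[ℝ] ℝ))) y :=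
      (hasDerivAt_inv hrne).comp_hasFDerivAt y (hasFDerivAt_norm' hy)
    have Hfc : HasFDerivAt (fun z => f z - c) (fderiv ℝ f y) y :=
      (hfd y hy).hasFDerivAt.sub_const c
    have H2a := Hfc.mul Hinv
    have Hinner : HasFDerivAt (fun z : EuclideanSpace ℝ (Fin n) => (⟪z, u⟫ : ℝ))
        (innerSL ℝ u : EuclideanSpace ℝ (Fin n) →L[ℝ] ℝ) y := by
      have heq : (fun z : EuclideanSpace ℝ (Fin n) => (⟪z, u⟫ : ℝ))
          = fun z => (innerSL ℝ u : EuclideanSpace ℝ (Fin n) →L[ℝ] ℝ) z := by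
        funext z; rw [innerSL_apply_apply, real_inner_comm]
      rw [heq]
      exact (innerSL ℝ u).hasFDerivAt
    have H2 := H2a.mul Hinner
    have H := H1.add H2
    rw [HasFDerivAt.fderiv (f := fun z => ‖z‖ * (fderiv ℝ f z) u + (f z - c) * ‖z‖⁻¹ * ⟪z, u⟫) H]
    simp only [ContinuousLinearMap.add_apply, ContinuousLinearMap.smul_apply,
      ContinuousLinearMap.comp_apply, ContinuousLinearMap.apply_apply, innerSL_apply_apply,
      smul_eq_mul, ContinuousLinearMap.neg_apply, Pi.mul_apply]
    rw [hBform y hy u v, real_inner_comm v u]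
    field_simp
    ring
  -- second derivative of h vanishes
  have hsecond : ∀ y : EuclideanSpace ℝ (Fin n), y ≠ 0 → fderiv ℝ (fderiv ℝ h) y = 0 := by
    intro y hy
    apply ContinuousLinearMap.ext; intro v
    apply ContinuousLinearMap.ext; intro u
    have happlyh : HasFDerivAt (fun z => fderiv ℝ h z u)
        ((ContinuousLinearMap.apply ℝ ℝ u).comp (fderiv ℝ (fderiv ℝ h) y)) y :=
      (ContinuousLinearMap.apply ℝ ℝ u).hasFDerivAt.comp y (hdh y hy).hasFDerivAt
    have := key y hy u v
    rw [happlyh.fderiv] at this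
    simpa using this
  -- fderiv h is constant
  obtain ⟨i0, hi0⟩ : ∃ i0 : Fin n, True := ⟨⟨0, by omega⟩, trivial⟩
  set y₀ : EuclideanSpace ℝ (Fin n) := EuclideanSpace.single i0 1 with hy₀def
  have hy₀ : y₀ ≠ 0 := by
    intro hcon
    have := congrArg (fun z : EuclideanSpace ℝ (Fin n) => z i0) hcon
    simp [hy₀def, EuclideanSpace.single_apply] at this
  set L : EuclideanSpace ℝ (Fin n) →L[ℝ] ℝ := fderiv ℝ h y₀ with hLdef
  have hL : ∀ y : EuclideanSpace ℝ (Fin n), y ≠ 0 → fderiv ℝ h y = L := by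
    intro y hy
    exact const_on_of_fderiv_zero' hUo hUc hdh hsecond hy hy₀
  -- h - L is constant
  have hconst : ∀ y : EuclideanSpace ℝ (Fin n), y ≠ 0 → h y - L y = h y₀ - L y₀ := by
    intro y hy
    refine const_on_of_fderiv_zero' hUo hUc (g := fun z => h z - L z)
      (fun z hz => ((hCh z hz).differentiableAt (by simp)).sub L.differentiableAt)
      (fun z hz => ?_) hy hy₀
    rw [fderiv_fun_sub ((hCh z hz).differentiableAt (by simp)) L.differentiableAt, L.fderiv, hL z hz,
      sub_self]
  -- homogeneity of h kills the constant
  have hhomh : ∀ y : EuclideanSpace ℝ (Fin n), y ≠ 0 → ∀ t : ℝ, 0 < t → h (t • y) = t * h y := by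
    intro y hy t ht
    simp only [hhdef]
    rw [norm_smul, hhom y hy t ht, Real.norm_eq_abs, abs_of_pos ht]
    ring
  have hk : h y₀ - L y₀ = 0 := by
    have h2 := hconst ((2:ℝ) • y₀) (by
      intro hcon
      apply hy₀
      have := congrArg (fun z : EuclideanSpace ℝ (Fin n) => (2:ℝ)⁻¹ • z) hcon
      simpa [smul_smul] using this)
    rw [hhomh y₀ hy₀ 2 two_pos, map_smul] at h2
    simp only [smul_eq_mul] at h2
    linarith
  have hhL : ∀ y : EuclideanSpace ℝ (Fin n), y ≠ 0 → h y = L y := by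
    intro y hy
    have := hconst y hy
    rw [hk] at this
    linarith
  -- conclude
  refine ⟨fun i => L (EuclideanSpace.single i 1), fun y hy => ?_⟩
  have hrne : (‖y‖ : ℝ) ≠ 0 := norm_ne_zero_iff.2 hy
  have hdecomp : y = ∑ i, y i • (EuclideanSpace.single i 1 : EuclideanSpace ℝ (Fin n)) := by
    have := (EuclideanSpace.basisFun (Fin n) ℝ).sum_repr y
    simp only [EuclideanSpace.basisFun_repr, EuclideanSpace.basisFun_apply] at this
    exact this.symm
  have hLy : L y = ∑ i, y i * L (EuclideanSpace.single i 1) := by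
    conv_lhs => rw [hdecomp]
    rw [map_sum]
    simp [smul_eq_mul]
  have hhy := hhL y hy
  simp only [hhdef] at hhy
  rw [hLy] at hhy
  have : f y = c + (∑ i, y i * L (EuclideanSpace.single i 1)) / ‖y‖ := by
    field_simp at hhy ⊢
    linarith
  rw [this, Finset.sum_div]
  congr 1
  apply Finset.sum_congr rfl
  intro i _
  ring
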